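/- arXiv:2403.16585 — 2 statements merged into one kernel-verified Lean document; each statement's English description precedes it below -/
import Mathlib

section
/- Define $K(\mathscr{S}) = \bar{Q}^{1/2}\Phi\bar{B}S(\mathscr{S})^{\top}S(\mathscr{S})\bar{R}^{-1}S(\mathscr{S})^{\top}S(\mathscr{S})\bar{B}^{\top}\Phi^{\top}\bar{Q}^{1/2}$ where $S(\mathscr{S})$ is the selection matrix of $\mathscr{S}\subseteq\{0,\ldots,N-1\}$ and $\bar{R}$ is block diagonal positive definite. Then for any $\mathscr{S}$ and any $\omega\notin\mathscr{S}$, $K(\mathscr{S}\cup\{\omega\}) = K(\mathscr{S}) + K(\{\omega\})$; more generally $K(\mathscr{S}) = \sum_{\omega\in\mathscr{S}} K(\{\omega\})$. -/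
/-!
`S(𝒮)ᵀ S(𝒮)` is the diagonal projection onto the blocks indexed by `𝒮`, so the middle factor of
`K(𝒮)` is `R̄⁻¹` with every block outside `𝒮` cut out. Because `R̄⁻¹` is block diagonal, this
compression is the sum over `ω ∈ 𝒮` of the single-block compressions, and `K` is linear in its
middle factor.
-/

open Matrix
open scoped Kronecker

/-- The row-selection matrix of a subset `𝒮 ⊆ {0,…,N-1}`. -/
noncomputable def selMat {N : ℕ} (𝒮 : Finset (Fin N)) :
    Matrix (Fin 𝒮.card) (Fin N) ℝ :=
  fun i j => if j = (𝒮.orderIsoOfFin rfl i : Fin N) then 1 else 0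

/-- `S(𝒮) = S̃(𝒮) ⊗ I_m`. -/
noncomputable def selKron {N m : ℕ} (𝒮 : Finset (Fin N)) :
    Matrix (Fin 𝒮.card × Fin m) (Fin N × Fin m) ℝ :=
  selMat 𝒮 ⊗ₖ (1 : Matrix (Fin m) (Fin m) ℝ)

/-- `K(𝒮) = Q̄^{1/2} Φ B̄ Sᵀ S R̄⁻¹ Sᵀ S B̄ᵀ Φᵀ Q̄^{1/2}`. -/
noncomputable def Kmat {N m d : ℕ}
    (Qhalf Φ : Matrix (Fin d) (Fin d) ℝ)
    (Bbar : Matrix (Fin d) (Fin N × Fin m) ℝ)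
    (Rbarinv : Matrix (Fin N × Fin m) (Fin N × Fin m) ℝ)
    (𝒮 : Finset (Fin N)) : Matrix (Fin d) (Fin d) ℝ :=
  let P : Matrix (Fin N × Fin m) (Fin N × Fin m) ℝ :=
    (selKron (m := m) 𝒮)ᵀ * selKron 𝒮
  let G : Matrix (Fin d) (Fin N × Fin m) ℝ := Qhalf * Φ * Bbar
  G * (P * (Rbarinv * (P * Gᵀ)))

def blockProj {ι κ α : Type*} [DecidableEq ι] [DecidableEq κ] [Zero α] [One α]
    (S : Finset ι) : Matrix (ι × κ) (ι × κ) α :=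
  diagonal fun a => if a.1 ∈ S then 1 else 0

theorem selMat_transpose_mul_self {N : ℕ} (𝒮 : Finset (Fin N)) :
    (selMat 𝒮)ᵀ * selMat 𝒮 = diagonal fun j => if j ∈ 𝒮 then 1 else 0 := by
  ext j k
  rw [mul_apply, diagonal_apply]
  refine (Equiv.sum_comp (𝒮.orderIsoOfFin rfl).toEquiv fun x : 𝒮 =>
    (if j = (x : Fin N) then (1 : ℝ) else 0) * if k = (x : Fin N) then 1 else 0).trans ?_
  rw [Finset.sum_coe_sort 𝒮 (fun x => (if j = x then (1 : ℝ) else 0) * if k = x then 1 else 0)]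
  by_cases hjk : j = k <;> simp [hjk]

theorem selKron_transpose_mul_self {N m : ℕ} (𝒮 : Finset (Fin N)) :
    (selKron (m := m) 𝒮)ᵀ * selKron 𝒮 = blockProj 𝒮 := by
  rw [selKron, ← kroneckerMap_transpose, transpose_one]
  -- `Sᵀ * S` elaborates with the `CStarMatrix` multiplication instance, which `rw` does not
  -- match against `mul_kronecker_mul`; unification up to defeq does.
  refine (mul_kronecker_mul _ _ _ _).symm.trans ?_
  rw [selMat_transpose_mul_self, mul_one, ← diagonal_one, diagonal_kronecker_diagonal, blockProj]
  simp only [mul_one]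

theorem blockProj_mul_mul_blockProj_eq_sum {ι κ α : Type*} [Fintype ι] [Fintype κ]
    [DecidableEq ι] [DecidableEq κ] [Semiring α] {M : Matrix (ι × κ) (ι × κ) α}
    (hM : ∀ a b, a.1 ≠ b.1 → M a b = 0) (S : Finset ι) :
    blockProj S * M * blockProj S = ∑ ω ∈ S, blockProj {ω} * M * blockProj {ω} := by
  ext a b
  simp only [blockProj, Matrix.sum_apply, mul_diagonal, diagonal_mul, Finset.mem_singleton]
  by_cases hab : a.1 = b.1
  · by_cases hb : b.1 ∈ S <;> simp [hab, hb]
  · simp [hM a b hab]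

theorem Kmat_eq_mul_blockProj {N m d : ℕ}
    (Qhalf Φ : Matrix (Fin d) (Fin d) ℝ)
    (Bbar : Matrix (Fin d) (Fin N × Fin m) ℝ)
    (Rbarinv : Matrix (Fin N × Fin m) (Fin N × Fin m) ℝ)
    (𝒮 : Finset (Fin N)) :
    Kmat Qhalf Φ Bbar Rbarinv 𝒮 =
      Qhalf * Φ * Bbar * (blockProj 𝒮 * Rbarinv * blockProj 𝒮) * (Qhalf * Φ * Bbar)ᵀ := by
  simp only [Kmat, selKron_transpose_mul_self, Matrix.mul_assoc]

theorem Kmat_eq_sum_Kmat_singleton {N m d : ℕ}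
    (Qhalf Φ : Matrix (Fin d) (Fin d) ℝ)
    (Bbar : Matrix (Fin d) (Fin N × Fin m) ℝ)
    {Rbarinv : Matrix (Fin N × Fin m) (Fin N × Fin m) ℝ}
    (hRbarinv : ∀ a b, a.1 ≠ b.1 → Rbarinv a b = 0) (𝒮 : Finset (Fin N)) :
    Kmat Qhalf Φ Bbar Rbarinv 𝒮 = ∑ ω ∈ 𝒮, Kmat Qhalf Φ Bbar Rbarinv {ω} := by
  rw [Kmat_eq_mul_blockProj, blockProj_mul_mul_blockProj_eq_sum hRbarinv, Matrix.mul_sum,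
    Matrix.sum_mul]
  simp only [Kmat_eq_mul_blockProj]

theorem K_additive_general {N m d : ℕ}
    (Qhalf Φ : Matrix (Fin d) (Fin d) ℝ)
    (Bbar : Matrix (Fin d) (Fin N × Fin m) ℝ)
    (R : Fin N → Matrix (Fin m) (Fin m) ℝ)
    (Rbarinv : Matrix (Fin N × Fin m) (Fin N × Fin m) ℝ)
    (hRbarinv : ∀ a b, Rbarinv a b = if a.1 = b.1 then (R a.1)⁻¹ a.2 b.2 else 0) :
    (∀ (𝒮 : Finset (Fin N)) (ω : Fin N), ω ∉ 𝒮 →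
        Kmat Qhalf Φ Bbar Rbarinv (insert ω 𝒮) =
          Kmat Qhalf Φ Bbar Rbarinv 𝒮 + Kmat Qhalf Φ Bbar Rbarinv {ω}) ∧
      (∀ 𝒮 : Finset (Fin N),
        Kmat Qhalf Φ Bbar Rbarinv 𝒮 = ∑ ω ∈ 𝒮, Kmat Qhalf Φ Bbar Rbarinv {ω}) := by
  have hsum := Kmat_eq_sum_Kmat_singleton Qhalf Φ Bbar (Rbarinv := Rbarinv)
    fun a b hab => by rw [hRbarinv, if_neg hab]
  refine ⟨fun 𝒮 ω hω => ?_, hsum⟩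
  rw [hsum (insert ω 𝒮), hsum 𝒮, Finset.sum_insert hω, add_comm]

theorem K_additive {N m d : ℕ}
    (Qhalf Φ : Matrix (Fin d) (Fin d) ℝ)
    (Bbar : Matrix (Fin d) (Fin N × Fin m) ℝ)
    (R : Fin N → Matrix (Fin m) (Fin m) ℝ)
    (hR : ∀ k, (R k).PosDef)
    (Rbarinv : Matrix (Fin N × Fin m) (Fin N × Fin m) ℝ)
    (hRbarinv : ∀ a b, Rbarinv a b = if a.1 = b.1 then (R a.1)⁻¹ a.2 b.2 else 0) :
    (∀ (𝒮 : Finset (Fin N)) (ω : Fin N), ω ∉ 𝒮 →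
        Kmat Qhalf Φ Bbar Rbarinv (insert ω 𝒮) =
          Kmat Qhalf Φ Bbar Rbarinv 𝒮 + Kmat Qhalf Φ Bbar Rbarinv {ω}) ∧
      (∀ 𝒮 : Finset (Fin N),
        Kmat Qhalf Φ Bbar Rbarinv 𝒮 = ∑ ω ∈ 𝒮, Kmat Qhalf Φ Bbar Rbarinv {ω}) :=
  K_additive_general Qhalf Φ Bbar R Rbarinv hRbarinv
end

section
/- Let $L\succeq 0$, $K(\mathscr{S})=\sum_{\omega\in\mathscr{S}}K(\{\omega\})$ with each $K(\{\omega\})\succeq 0$, and suppose $\max_{\omega\in\mathscr{T}}\operatorname{tr}[LK(\{\omega\})] > 0$. Define $f(\mathscr{S}) = \operatorname{tr}[L(I+K(\emptyset))^{-1}] - \operatorname{tr}[L(I+K(\mathscr{S}))^{-1}]$ and $\underline{\gamma} = \dfrac{\min_{\omega}\operatorname{tr}[LK(\{\omega\})]\ \{\min_{\omega}\lambda_{\min}[I+K(\{\omega\})]\}^2}{\max_{\omega}\operatorname{tr}[LK(\{\omega\})]\ \{\lambda_1[I+K(\mathscr{T})]\}^2}$. Then for all $\Omega,\mathscr{S}\subseteq\mathscr{T}$,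 $\sum_{\omega\in\Omega\setminus\mathscr{S}}\big(f(\mathscr{S}\cup\{\omega\})-f(\mathscr{S})\big) \geq \underline{\gamma}\,\big(f(\mathscr{S}\cup\Omega)-f(\mathscr{S})\big)$, i.e., the submodularity ratio of $f$ is at least $\underline{\gamma}$. -/
/-!
Put `A = I + K(𝒮)`. For `N ⪰ 0` the gain `tr[L (A⁻¹ - (A + N)⁻¹)]` is compared with the quantity
`tr[L A⁻¹ N A⁻¹]`, which is additive in `N`. Conjugating by `A^{-1/2}` turns `r A ⪯ A + N ⪯ t A`
into the bounds `r - 1 ≤ x ≤ t - 1` on the spectrum of `C = A^{-1/2} N A^{-1/2}`, where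
`r x / (1 + x) ≤ x ≤ t x / (1 + x)`; hence `r (A⁻¹ - (A + N)⁻¹) ⪯ A⁻¹ N A⁻¹ ⪯ t (A⁻¹ - (A + N)⁻¹)`.
Summing over `ω ∈ Ω \ 𝒮` bounds the ratio of the gains below by `r / t`. With `m` and `Λ` the
eigenvalue bounds in `γ` and `q I ⪯ A ⪯ p I` (`q = p = 1` if `𝒮 = ∅`, else `q = m`, `p = Λ`), one
may take `t = Λ / q` and `r = m / p`, and then `r / t ≥ (m / Λ)² ≥ γ`.
-/

open Matrix
open scoped MatrixOrder

namespace Matrix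

section RCLike

open scoped ComplexOrder

variable {n 𝕜 : Type*} [Fintype n] [DecidableEq n] [RCLike 𝕜] {A C N : Matrix n n 𝕜}

lemma continuousOn_div_one_add (hC : 0 ≤ C) :
    ContinuousOn (fun x : ℝ ↦ x / (1 + x)) (spectrum ℝ C) :=
  continuousOn_id.div (continuousOn_const.add continuousOn_id) fun _ hx ↦
    (add_pos_of_pos_of_nonneg one_pos (spectrum_nonneg_of_nonneg hC hx)).ne'

lemma one_sub_inv_one_add_eq_cfc (hC : 0 ≤ C) :
    1 - (1 + C)⁻¹ = cfc (fun x : ℝ ↦ x / (1 + x)) C := by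
  have hpos : ∀ x ∈ spectrum ℝ C, 1 + x ≠ 0 := fun x hx ↦
    (add_pos_of_pos_of_nonneg one_pos (spectrum_nonneg_of_nonneg hC hx)).ne'
  have hinv : (1 + C)⁻¹ = cfc (fun x : ℝ ↦ (1 + x)⁻¹) C := by
    rw [cfc_inv (fun x : ℝ ↦ 1 + x) C hpos, cfc_const_add (1 : ℝ) (fun x ↦ x) C, cfc_id' ℝ C,
      map_one, nonsing_inv_eq_ringInverse]
  rw [hinv, ← cfc_one ℝ C, ← cfc_sub (1 : ℝ → ℝ) (fun x : ℝ ↦ (1 + x)⁻¹) C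
    continuousOn_const ((continuousOn_const.add continuousOn_id).inv₀ hpos)]
  refine cfc_congr fun x hx ↦ ?_
  rw [Pi.one_apply]
  field_simp [hpos x hx]
  ring

lemma le_smul_one_sub_inv_one_add (hC : 0 ≤ C) {t : ℝ} (ht : 1 + C ≤ t • 1) :
    C ≤ t • (1 - (1 + C)⁻¹) := by
  have hspec : ∀ x ∈ spectrum ℝ C, x ≤ t - 1 := by
    rw [← le_algebraMap_iff_spectrum_le, Algebra.algebraMap_eq_smul_one, sub_smul, one_smul]
    exact le_sub_iff_add_le'.mpr ht
  rw [one_sub_inv_one_add_eq_cfc hC, ← cfc_const_mul t _ C (continuousOn_div_one_add hC)]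
  nth_rw 1 [← cfc_id' ℝ C]
  refine (cfc_le_iff (fun x ↦ x) (fun x ↦ t * (x / (1 + x))) C continuousOn_id
    (continuousOn_const.mul (continuousOn_div_one_add hC))).mpr fun x hx ↦ ?_
  have h0 := spectrum_nonneg_of_nonneg hC hx
  rw [mul_div_assoc', le_div_iff₀ (by positivity)]
  nlinarith [hspec x hx]

lemma smul_one_sub_inv_one_add_le (hC : 0 ≤ C) {r : ℝ} (hr : r • 1 ≤ 1 + C) :
    r • (1 - (1 + C)⁻¹) ≤ C := by
  have hspec : ∀ x ∈ spectrum ℝ C, r - 1 ≤ x := by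
    rw [← algebraMap_le_iff_le_spectrum, Algebra.algebraMap_eq_smul_one, sub_smul, one_smul]
    exact sub_le_iff_le_add'.mpr hr
  rw [one_sub_inv_one_add_eq_cfc hC, ← cfc_const_mul r _ C (continuousOn_div_one_add hC)]
  nth_rw 2 [← cfc_id' ℝ C]
  refine (cfc_le_iff (fun x ↦ r * (x / (1 + x))) (fun x ↦ x) C
    (continuousOn_const.mul (continuousOn_div_one_add hC)) continuousOn_id).mpr fun x hx ↦ ?_
  have h0 := spectrum_nonneg_of_nonneg hC hx
  rw [mul_div_assoc', div_le_iff₀ (by positivity)]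
  nlinarith [hspec x hx]

lemma inv_one_add_le_one (hC : 0 ≤ C) : (1 + C)⁻¹ ≤ 1 := by
  rw [← sub_nonneg, one_sub_inv_one_add_eq_cfc hC]
  exact cfc_nonneg fun x hx ↦ by
    have := spectrum_nonneg_of_nonneg hC hx
    positivity

lemma PosDef.exists_conj_eq_one (hA : A.PosDef) :
    ∃ R : Matrix n n 𝕜, IsSelfAdjoint R ∧ R * A * R = 1 ∧
      ∀ N, A⁻¹ * N * A⁻¹ = R * (R * N * R) * R ∧
        A⁻¹ - (A + N)⁻¹ = R * (1 - (1 + R * N * R)⁻¹) * R := by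
  set s := CFC.sqrt A
  have hss : s * s = A := CFC.sqrt_mul_sqrt_self A hA.posSemidef.nonneg
  have hs : IsUnit s.det := isUnit_of_mul_isUnit_left <| by
    rw [← det_mul, hss]; exact (isUnit_iff_isUnit_det A).mp hA.isUnit
  have hRs : s⁻¹ * s = 1 := nonsing_inv_mul s hs
  have hsR : s * s⁻¹ = 1 := mul_nonsing_inv s hs
  have hAinv : A⁻¹ = s⁻¹ * s⁻¹ := by rw [← hss, mul_inv_rev]
  have hRAR : s⁻¹ * A * s⁻¹ = 1 := by
    rw [← hss, ← mul_assoc, hRs, one_mul, hsR]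
  refine ⟨s⁻¹, (IsSelfAdjoint.of_nonneg (CFC.sqrt_nonneg A)).isHermitian.inv, hRAR,
    fun N ↦ ⟨by simp only [hAinv, mul_assoc], ?_⟩⟩
  have hAN : A + N = s * (1 + s⁻¹ * N * s⁻¹) * s := by
    rw [mul_add, add_mul, mul_one, hss, ← mul_assoc, ← mul_assoc, hsR, one_mul, mul_assoc, hRs,
      mul_one]
  rw [hAN, mul_inv_rev, mul_inv_rev, hAinv, mul_sub, sub_mul, mul_one]
  simp only [mul_assoc]

lemma PosDef.inv_mul_mul_inv_le_smul_inv_sub_inv_add (hA : A.PosDef) (hN : 0 ≤ N) {t : ℝ}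
    (ht : A + N ≤ t • A) : A⁻¹ * N * A⁻¹ ≤ t • (A⁻¹ - (A + N)⁻¹) := by
  obtain ⟨R, hR, hRAR, hconj⟩ := hA.exists_conj_eq_one
  obtain ⟨hN', hsub⟩ := hconj N
  have hC := le_smul_one_sub_inv_one_add (hR.conjugate_nonneg hN) <| by
    simpa only [mul_add, add_mul, mul_smul_comm, smul_mul_assoc, hRAR] using
      hR.conjugate_le_conjugate ht
  rw [hN', hsub, ← smul_mul_assoc, ← mul_smul_comm]
  exact hR.conjugate_le_conjugate hC

lemma PosDef.smul_inv_sub_inv_add_le_inv_mul_mul_inv (hA : A.PosDef) (hN : 0 ≤ N) {r : ℝ}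
    (hr : r • A ≤ A + N) : r • (A⁻¹ - (A + N)⁻¹) ≤ A⁻¹ * N * A⁻¹ := by
  obtain ⟨R, hR, hRAR, hconj⟩ := hA.exists_conj_eq_one
  obtain ⟨hN', hsub⟩ := hconj N
  have hC := smul_one_sub_inv_one_add_le (hR.conjugate_nonneg hN) <| by
    simpa only [mul_add, add_mul, mul_smul_comm, smul_mul_assoc, hRAR] using
      hR.conjugate_le_conjugate hr
  rw [hN', hsub, ← smul_mul_assoc, ← mul_smul_comm]
  exact hR.conjugate_le_conjugate hC

lemma PosDef.inv_add_le_inv (hA : A.PosDef) (hN : 0 ≤ N) : (A + N)⁻¹ ≤ A⁻¹ := by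
  obtain ⟨R, hR, -, hconj⟩ := hA.exists_conj_eq_one
  rw [← sub_nonneg, (hconj N).2]
  exact hR.conjugate_nonneg (sub_nonneg.mpr (inv_one_add_le_one (hR.conjugate_nonneg hN)))

lemma trace_mul_nonneg {L X : Matrix n n 𝕜} (hL : 0 ≤ L) (hX : 0 ≤ X) : 0 ≤ (L * X).trace := by
  rw [← CFC.sqrt_mul_sqrt_self X hX, ← mul_assoc, trace_mul_comm, ← mul_assoc]
  have hs := IsSelfAdjoint.of_nonneg (CFC.sqrt_nonneg X)
  exact (nonneg_iff_posSemidef.mp (hs.conjugate_nonneg hL)).trace_nonneg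

lemma trace_mul_le_trace_mul {L X Y : Matrix n n 𝕜} (hL : 0 ≤ L) (h : X ≤ Y) :
    (L * X).trace ≤ (L * Y).trace := by
  rw [← sub_nonneg, ← trace_sub, ← mul_sub]
  exact trace_mul_nonneg hL (sub_nonneg.mpr h)

lemma IsHermitian.le_smul_one_iff (hA : A.IsHermitian) {c : ℝ} :
    A ≤ c • 1 ↔ ∀ i, hA.eigenvalues i ≤ c := by
  rw [← Algebra.algebraMap_eq_smul_one, le_algebraMap_iff_spectrum_le hA.isSelfAdjoint,
    hA.spectrum_real_eq_range_eigenvalues, Set.forall_mem_range]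

lemma IsHermitian.smul_one_le_iff (hA : A.IsHermitian) {c : ℝ} :
    c • 1 ≤ A ↔ ∀ i, c ≤ hA.eigenvalues i := by
  rw [← Algebra.algebraMap_eq_smul_one, algebraMap_le_iff_le_spectrum hA.isSelfAdjoint,
    hA.spectrum_real_eq_range_eigenvalues, Set.forall_mem_range]

end RCLike

end Matrix

open Finset

theorem Matrix.PosDef.div_mul_trace_inv_sub_inv_add_sum_le {n ι : Type*} [Fintype n]
    [DecidableEq n] {L A : Matrix n n ℝ} (hL : 0 ≤ L) (hA : A.PosDef) {s : Finset ι}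
    {N : ι → Matrix n n ℝ} (hN : ∀ i ∈ s, 0 ≤ N i) {r t : ℝ} (ht : 0 < t)
    (hNt : ∀ i ∈ s, A + N i ≤ t • A) (hNr : r • A ≤ A + ∑ i ∈ s, N i) :
    r / t * (L * (A⁻¹ - (A + ∑ i ∈ s, N i)⁻¹)).trace ≤
      ∑ i ∈ s, (L * (A⁻¹ - (A + N i)⁻¹)).trace := by
  have hupper := trace_mul_le_trace_mul hL <|
    hA.smul_inv_sub_inv_add_le_inv_mul_mul_inv (sum_nonneg hN) hNr
  have hlower : ∀ i ∈ s, (L * (A⁻¹ * N i * A⁻¹)).trace ≤ t * (L * (A⁻¹ - (A + N i)⁻¹)).trace :=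
    fun i hi ↦ by
      simpa only [mul_smul_comm, trace_smul, smul_eq_mul] using
        trace_mul_le_trace_mul hL (hA.inv_mul_mul_inv_le_smul_inv_sub_inv_add (hN i hi) (hNt i hi))
  rw [mul_smul_comm, trace_smul, smul_eq_mul] at hupper
  rw [div_mul_eq_mul_div, div_le_iff₀ ht, sum_mul]
  calc r * (L * (A⁻¹ - (A + ∑ i ∈ s, N i)⁻¹)).trace
      ≤ (L * (A⁻¹ * (∑ i ∈ s, N i) * A⁻¹)).trace := hupper
    _ = ∑ i ∈ s, (L * (A⁻¹ * N i * A⁻¹)).trace := by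
      simp only [mul_sum, sum_mul, trace_sum]
    _ ≤ ∑ i ∈ s, (L * (A⁻¹ - (A + N i)⁻¹)).trace * t :=
      sum_le_sum fun i hi ↦ (hlower i hi).trans_eq (mul_comm _ _)

lemma monotone_of_eq_sum_singleton {T M : Type*} [AddCommMonoid M] [PartialOrder M]
    [IsOrderedAddMonoid M] {K : Finset T → M} (hK : ∀ ω, 0 ≤ K {ω})
    (hadd : ∀ 𝒮, K 𝒮 = ∑ ω ∈ 𝒮, K {ω}) : Monotone K := fun X Y hXY ↦ by
  rw [hadd X, hadd Y]
  exact sum_le_sum_of_subset_of_nonneg hXY fun ω _ _ ↦ hK ω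

section SetFunction

variable {T n : Type*} {K : Finset T → Matrix n n ℝ}

lemma posDef_one_add [DecidableEq n] (hK : ∀ ω, 0 ≤ K {ω})
    (hadd : ∀ 𝒮, K 𝒮 = ∑ ω ∈ 𝒮, K {ω}) (𝒮 : Finset T) : (1 + K 𝒮).PosDef :=
  PosDef.one.add_posSemidef <| nonneg_iff_posSemidef.mp <| hadd 𝒮 ▸ sum_nonneg fun ω _ ↦ hK ω

lemma antitone_inv_one_add [Fintype n] [DecidableEq n] (hK : ∀ ω, 0 ≤ K {ω})
    (hadd : ∀ 𝒮, K 𝒮 = ∑ ω ∈ 𝒮, K {ω}) : Antitone fun 𝒮 ↦ (1 + K 𝒮)⁻¹ := fun 𝒮 X h ↦ by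
  dsimp only
  have hX : 1 + K X = 1 + K 𝒮 + (K X - K 𝒮) := by abel
  rw [hX]
  exact (posDef_one_add hK hadd 𝒮).inv_add_le_inv
    (sub_nonneg.mpr (monotone_of_eq_sum_singleton hK hadd h))

lemma one_add_insert [DecidableEq T] [DecidableEq n] (hadd : ∀ 𝒮, K 𝒮 = ∑ ω ∈ 𝒮, K {ω})
    {𝒮 : Finset T} {ω : T} (hω : ω ∉ 𝒮) : 1 + K (insert ω 𝒮) = 1 + K 𝒮 + K {ω} := by
  rw [hadd (insert ω 𝒮), sum_insert hω, ← hadd 𝒮, add_comm (K {ω}), add_assoc]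

lemma one_add_union [DecidableEq T] [DecidableEq n] (hadd : ∀ 𝒮, K 𝒮 = ∑ ω ∈ 𝒮, K {ω})
    (𝒮 Ω : Finset T) :
    1 + K (𝒮 ∪ Ω) = 1 + K 𝒮 + ∑ ω ∈ Ω \ 𝒮, K {ω} := by
  rw [hadd (𝒮 ∪ Ω), ← union_sdiff_self_eq_union, sum_union disjoint_sdiff, ← hadd 𝒮, add_assoc]

lemma exists_smul_one_le_one_add_le_smul_one [Fintype T] [DecidableEq n] (hK : ∀ ω, 0 ≤ K {ω})
    (hadd : ∀ 𝒮, K 𝒮 = ∑ ω ∈ 𝒮, K {ω}) {m Λ : ℝ} (hm : 0 < m) (hmΛ : m ≤ Λ)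
    (hmK : ∀ ω, m • 1 ≤ 1 + K {ω}) (hΛK : 1 + K univ ≤ Λ • 1) (𝒮 : Finset T) :
    ∃ q p : ℝ, 0 < q ∧ 0 < p ∧ q • 1 ≤ 1 + K 𝒮 ∧ 1 + K 𝒮 ≤ p • 1 ∧ m * p ≤ Λ * q := by
  have hmono := monotone_of_eq_sum_singleton hK hadd
  rcases 𝒮.eq_empty_or_nonempty with rfl | ⟨ω, hω⟩
  · have h1 : 1 + K ∅ = 1 := by simp [hadd ∅]
    exact ⟨1, 1, one_pos, one_pos, by rw [h1, one_smul], by rw [h1, one_smul], by linarith⟩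
  · exact ⟨m, Λ, hm, hm.trans_le hmΛ,
      (hmK ω).trans (add_le_add_right (hmono (singleton_subset_iff.mpr hω)) 1),
      (add_le_add_right (hmono (subset_univ _)) 1).trans hΛK, (mul_comm m Λ).le⟩

theorem sq_div_mul_trace_le_sum [Fintype T] [DecidableEq T] [Fintype n] [DecidableEq n]
    (hK : ∀ ω, 0 ≤ K {ω}) (hadd : ∀ 𝒮, K 𝒮 = ∑ ω ∈ 𝒮, K {ω}) {L : Matrix n n ℝ} (hL : 0 ≤ L)
    {m Λ : ℝ} (hm : 0 < m) (hmΛ : m ≤ Λ) (hmK : ∀ ω, m • 1 ≤ 1 + K {ω})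
    (hΛK : 1 + K univ ≤ Λ • 1) {Ω 𝒮 : Finset T} (hΩ𝒮 : (Ω \ 𝒮).Nonempty) :
    (m / Λ) ^ 2 * (L * ((1 + K 𝒮)⁻¹ - (1 + K (𝒮 ∪ Ω))⁻¹)).trace ≤
      ∑ ω ∈ Ω \ 𝒮, (L * ((1 + K 𝒮)⁻¹ - (1 + K (insert ω 𝒮))⁻¹)).trace := by
  have hmono := monotone_of_eq_sum_singleton hK hadd
  obtain ⟨q, p, hq, hp, hqA, hAp, hmpq⟩ :=
    exists_smul_one_le_one_add_le_smul_one hK hadd hm hmΛ hmK hΛK 𝒮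
  have hΛ : 0 < Λ := hm.trans_le hmΛ
  have hratio : (m / Λ) ^ 2 ≤ m / p / (Λ / q) := by
    rw [div_div_div_eq, div_pow, div_le_div_iff₀ (by positivity) (by positivity)]
    nlinarith [mul_le_mul_of_nonneg_left hmpq (by positivity : 0 ≤ m * Λ)]
  have hgain : 0 ≤ (L * ((1 + K 𝒮)⁻¹ - (1 + K (𝒮 ∪ Ω))⁻¹)).trace :=
    trace_mul_nonneg hL (sub_nonneg.mpr (antitone_inv_one_add hK hadd subset_union_left))
  refine (mul_le_mul_of_nonneg_right hratio hgain).trans ?_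
  rw [sum_congr rfl fun ω hω ↦ by rw [one_add_insert hadd (mem_sdiff.mp hω).2],
    one_add_union hadd]
  refine (posDef_one_add hK hadd 𝒮).div_mul_trace_inv_sub_inv_add_sum_le hL (fun ω _ ↦ hK ω)
    (by positivity) (fun ω hω ↦ ?_) ?_
  · calc 1 + K 𝒮 + K {ω} ≤ Λ • 1 := by
          rw [← one_add_insert hadd (mem_sdiff.mp hω).2]
          exact (add_le_add_right (hmono (subset_univ _)) 1).trans hΛK
      _ = (Λ / q) • q • 1 := by rw [smul_smul, div_mul_cancel₀ _ hq.ne']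
      _ ≤ (Λ / q) • (1 + K 𝒮) := smul_le_smul_of_nonneg_left hqA (by positivity)
  · obtain ⟨ω₀, hω₀⟩ := hΩ𝒮
    calc (m / p) • (1 + K 𝒮) ≤ (m / p) • p • 1 := smul_le_smul_of_nonneg_left hAp (by positivity)
      _ = m • 1 := by rw [smul_smul, div_mul_cancel₀ _ hp.ne']
      _ ≤ 1 + K (𝒮 ∪ Ω) := (hmK ω₀).trans <| add_le_add_right (hmono <|
          singleton_subset_iff.mpr (mem_union_right 𝒮 (mem_sdiff.mp hω₀).1)) 1
      _ = 1 + K 𝒮 + ∑ ω ∈ Ω \ 𝒮, K {ω} := one_add_union hadd 𝒮 Ω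

end SetFunction

lemma mul_sq_div_mul_sq_le_div_sq {α β m Λ : ℝ} (hαβ : α ≤ β) (hβ : 0 ≤ β) :
    α * m ^ 2 / (β * Λ ^ 2) ≤ (m / Λ) ^ 2 := by
  rw [mul_div_mul_comm, ← div_pow]
  exact mul_le_of_le_one_left (sq_nonneg _) (div_le_one_of_le₀ hαβ hβ)

theorem submodularity_ratio_lower_bound_general {T : Type*} [Fintype T] [DecidableEq T]
    {d : ℕ}
    (L : Matrix (Fin d) (Fin d) ℝ) (hL : L.PosSemidef)
    (K : Finset T → Matrix (Fin d) (Fin d) ℝ)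
    (hpsd : ∀ ω : T, (K {ω}).PosSemidef)
    (hadd : ∀ 𝒮 : Finset T, K 𝒮 = ∑ ω ∈ 𝒮, K {ω})
    (hHω : ∀ ω : T, (1 + K {ω}).IsHermitian)
    (hHuniv : (1 + K (Finset.univ : Finset T)).IsHermitian)
    (f : Finset T → ℝ)
    (hf : ∀ 𝒮, f 𝒮 = (L * (1 + K (∅ : Finset T))⁻¹).trace - (L * (1 + K 𝒮)⁻¹).trace)
    (γ : ℝ)
    (hγ : γ = (⨅ ω : T, (L * K {ω}).trace) *
          (⨅ ω : T, ⨅ i, (hHω ω).eigenvalues i) ^ 2 /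
        ((⨆ ω : T, (L * K {ω}).trace) * (⨆ i, hHuniv.eigenvalues i) ^ 2)) :
    ∀ Ω 𝒮 : Finset T,
      ∑ ω ∈ Ω \ 𝒮, (f (insert ω 𝒮) - f 𝒮) ≥ γ * (f (𝒮 ∪ Ω) - f 𝒮) := by
  intro Ω 𝒮
  have hgain : ∀ X, f X - f 𝒮 = (L * ((1 + K 𝒮)⁻¹ - (1 + K X)⁻¹)).trace := fun X ↦ by
    rw [hf, hf, mul_sub, trace_sub]; ring
  simp only [hgain, ge_iff_le]
  rcases (Ω \ 𝒮).eq_empty_or_nonempty with hΩ𝒮 | hΩ𝒮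
  · simp [hΩ𝒮, union_eq_left.mpr (sdiff_eq_empty_iff_subset.mp hΩ𝒮)]
  rcases Nat.eq_zero_or_pos d with rfl | hd
  · simp [Matrix.trace]
  obtain ⟨ω₀, -⟩ := id hΩ𝒮
  have : Nonempty T := ⟨ω₀⟩
  have : Nonempty (Fin d) := ⟨⟨0, hd⟩⟩
  have hL₀ : 0 ≤ L := nonneg_iff_posSemidef.mpr hL
  have hK : ∀ ω, 0 ≤ K {ω} := fun ω ↦ nonneg_iff_posSemidef.mpr (hpsd ω)
  set m := ⨅ ω, ⨅ i, (hHω ω).eigenvalues i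
  set Λ := ⨆ i, hHuniv.eigenvalues i
  have hm_le : ∀ ω i, m ≤ (hHω ω).eigenvalues i := fun ω i ↦
    (ciInf_le (Finite.bddBelow_range _) ω).trans (ciInf_le (Finite.bddBelow_range _) i)
  have hmK : ∀ ω, m • 1 ≤ 1 + K {ω} := fun ω ↦ (hHω ω).smul_one_le_iff.mpr (hm_le ω)
  have hΛK : 1 + K univ ≤ Λ • 1 :=
    hHuniv.le_smul_one_iff.mpr (le_ciSup (Finite.bddAbove_range _))
  have hm : 1 ≤ m := le_ciInf fun ω ↦ le_ciInf ((hHω ω).smul_one_le_iff.mp (by simpa using hK ω))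
  have hmΛ : m ≤ Λ := (hm_le ω₀ ⟨0, hd⟩).trans <| (hHω ω₀).le_smul_one_iff.mp
    ((add_le_add_right (monotone_of_eq_sum_singleton hK hadd (subset_univ {ω₀})) 1).trans hΛK) _
  have hγm : γ ≤ (m / Λ) ^ 2 := by
    have hα := ciInf_le (Finite.bddBelow_range fun ω ↦ (L * K {ω}).trace) ω₀
    have hβ := le_ciSup (Finite.bddAbove_range fun ω ↦ (L * K {ω}).trace) ω₀
    exact hγ ▸ mul_sq_div_mul_sq_le_div_sq (hα.trans hβ) ((trace_mul_nonneg hL₀ (hK ω₀)).trans hβ)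
  calc γ * (L * ((1 + K 𝒮)⁻¹ - (1 + K (𝒮 ∪ Ω))⁻¹)).trace
      ≤ (m / Λ) ^ 2 * (L * ((1 + K 𝒮)⁻¹ - (1 + K (𝒮 ∪ Ω))⁻¹)).trace :=
        mul_le_mul_of_nonneg_right hγm <| trace_mul_nonneg hL₀ <|
          sub_nonneg.mpr (antitone_inv_one_add hK hadd subset_union_left)
    _ ≤ _ := sq_div_mul_trace_le_sum hK hadd hL₀ (by linarith) hmΛ hmK hΛK hΩ𝒮

theorem submodularity_ratio_lower_bound {T : Type*} [Fintype T] [DecidableEq T]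
    [Nonempty T] {d : ℕ}
    (L : Matrix (Fin d) (Fin d) ℝ) (hL : L.PosSemidef)
    (K : Finset T → Matrix (Fin d) (Fin d) ℝ)
    (hpsd : ∀ ω : T, (K {ω}).PosSemidef)
    (hadd : ∀ 𝒮 : Finset T, K 𝒮 = ∑ ω ∈ 𝒮, K {ω})
    (hmax : 0 < ⨆ ω : T, (L * K {ω}).trace)
    (hHω : ∀ ω : T, (1 + K {ω}).IsHermitian)
    (hHuniv : (1 + K (Finset.univ : Finset T)).IsHermitian)
    (f : Finset T → ℝ)
    (hf : ∀ 𝒮, f 𝒮 = (L * (1 + K (∅ : Finset T))⁻¹).trace - (L * (1 + K 𝒮)⁻¹).trace)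
    (γ : ℝ)
    (hγ : γ = (⨅ ω : T, (L * K {ω}).trace) *
          (⨅ ω : T, ⨅ i, (hHω ω).eigenvalues i) ^ 2 /
        ((⨆ ω : T, (L * K {ω}).trace) * (⨆ i, hHuniv.eigenvalues i) ^ 2)) :
    ∀ Ω 𝒮 : Finset T,
      ∑ ω ∈ Ω \ 𝒮, (f (insert ω 𝒮) - f 𝒮) ≥ γ * (f (𝒮 ∪ Ω) - f 𝒮) :=
  submodularity_ratio_lower_bound_general L hL K hpsd hadd hHω hHuniv f hf γ hγ
end
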